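/- arXiv:1411.6168 — 5 statements merged into one kernel-verified Lean document; each statement's English description precedes it below -/
import Mathlib

section
/- Let p ≥ 2 and M ≥ 1 be integers, and for each n let v_p(n) denote the sum of the base-p digits of n reduced modulo p. Partition {0, 1, ..., p^{M+1} − 1} into sets S_0, S_1, ..., S_{p−1} by placing n into S_{v_p(n)}. Then for every m with 0 ≤ m ≤ M and every pair j, k with 0 ≤ j, k ≤ p − 1, one has ∑_{n ∈ S_j} n^m = ∑_{n ∈ S_k} n^m (with the convention 0^0 = 1). -/
/-- The generalized Prouhet–Thue–Morse sequence: sum of base-`p` digits of `n`, mod `p`. -/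
def vp (p n : ℕ) : ℕ := (Nat.digits p n).sum % p

open Finset

private lemma sum_range_mul_split {β : Type*} [AddCommMonoid β] (b c : ℕ) (f : ℕ → β) :
    ∑ n ∈ range (b * c), f n = ∑ d ∈ range b, ∑ a ∈ range c, f (d * c + a) := by
  induction b with
  | zero => simp
  | succ b ih =>
    rw [Nat.succ_mul, Finset.sum_range_add, ih, Finset.sum_range_succ]

private lemma sdig_split {p : ℕ} (hp : 2 ≤ p) {a d L : ℕ} (ha : a < p ^ L) (hd : d < p) :
    (Nat.digits p (d * p ^ L + a)).sum = (Nat.digits p a).sum + d := by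
  rcases Nat.eq_zero_or_pos d with rfl | hd0
  · simp
  have hb : 1 < p := hp
  have hlen : (Nat.digits p a).length ≤ L := by
    rcases Nat.eq_zero_or_pos a with rfl | ha0
    · simp
    · rw [Nat.digits_len p a hb (by omega)]
      have := (Nat.log_lt_iff_lt_pow hb (by omega : a ≠ 0)).mpr ha
      omega
  have key := Nat.digits_append_zeroes_append_digits
    (b := p) (k := L - (Nat.digits p a).length) (m := d) (n := a) hb hd0
  rw [Nat.add_sub_cancel' hlen] at key
  have hdd : Nat.digits p d = [d] := by
    rw [Nat.digits_def' hb hd0, Nat.mod_eq_of_lt hd, Nat.div_eq_of_lt hd]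
    simp
  have : d * p ^ L + a = a + p ^ L * d := by ring
  rw [this, ← key, hdd]
  simp [List.sum_append]

/-- Sum of `i`-th powers over the class of residue `c` among `n < p^L`. -/
private def S (p L i : ℕ) (c : ZMod p) : ℕ :=
  ∑ n ∈ (range (p ^ L)).filter (fun n => (((Nat.digits p n).sum : ℕ) : ZMod p) = c), n ^ i

private lemma sum_sub_range {p : ℕ} [NeZero p] (g : ZMod p → ℕ) (c : ZMod p) :
    ∑ d ∈ range p, g (c - (d : ZMod p)) = ∑ e : ZMod p, g e := by
  refine Finset.sum_nbij' (fun d => c - (d : ZMod p)) (fun e => (c - e).val)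
    (fun a _ => Finset.mem_univ _) (fun e _ => Finset.mem_range.mpr (ZMod.val_lt _))
    (fun d hd => ?_) (fun e _ => ?_) (fun d _ => rfl)
  · show (c - (c - (d : ZMod p))).val = d
    rw [sub_sub_cancel, ZMod.val_cast_of_lt (Finset.mem_range.mp hd)]
  · show c - (((c - e).val : ℕ) : ZMod p) = e
    rw [ZMod.natCast_zmod_val, sub_sub_cancel]

private lemma S_step {p : ℕ} (hp : 2 ≤ p) (L i : ℕ) (c : ZMod p) :
    S p (L + 1) i c =
      ∑ d ∈ range p, ∑ t ∈ range (i + 1),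
        (d * p ^ L) ^ t * i.choose t * S p L (i - t) (c - (d : ZMod p)) := by
  rw [S, Finset.sum_filter, pow_succ, mul_comm (p ^ L) p, sum_range_mul_split]
  refine Finset.sum_congr rfl (fun d hd => ?_)
  have hd' : d < p := Finset.mem_range.mp hd
  have step1 : ∀ a ∈ range (p ^ L),
      (if (((Nat.digits p (d * p ^ L + a)).sum : ℕ) : ZMod p) = c
         then (d * p ^ L + a) ^ i else 0)
      = ∑ t ∈ range (i + 1),
          (if (((Nat.digits p a).sum : ℕ) : ZMod p) = c - (d : ZMod p)
           then (d * p ^ L) ^ t * a ^ (i - t) * i.choose t else 0) := by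
    intro a ha
    have ha' : a < p ^ L := Finset.mem_range.mp ha
    rw [sdig_split hp ha' hd', Nat.cast_add]
    by_cases h : (((Nat.digits p a).sum : ℕ) : ZMod p) = c - (d : ZMod p)
    · rw [if_pos (by rw [h]; ring), add_pow]
      exact Finset.sum_congr rfl fun t _ => (if_pos h).symm
    · rw [if_neg (fun hh => h (by rw [← hh]; ring))]
      exact (Finset.sum_eq_zero fun t _ => if_neg h).symm
  rw [Finset.sum_congr rfl step1, Finset.sum_comm]
  refine Finset.sum_congr rfl fun t ht => ?_
  rw [S, Finset.sum_filter, Finset.mul_sum]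
  refine Finset.sum_congr rfl fun a _ => ?_
  split_ifs <;> ring

private lemma S_indep {p : ℕ} (hp : 2 ≤ p) :
    ∀ L i, i < L → ∀ c c' : ZMod p, S p L i c = S p L i c' := by
  haveI : NeZero p := ⟨by omega⟩
  intro L
  induction L with
  | zero => omega
  | succ L ih =>
    intro i hi c c'
    have formula : ∀ c : ZMod p, S p (L + 1) i c =
        (∑ t ∈ range i, ∑ d ∈ range p,
          (d * p ^ L) ^ (t + 1) * i.choose (t + 1) * S p L (i - (t + 1)) 0) +
        ∑ e : ZMod p, S p L i e := by
      intro c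
      rw [S_step hp, Finset.sum_comm, Finset.sum_range_succ']
      congr 1
      · refine Finset.sum_congr rfl (fun t ht => Finset.sum_congr rfl (fun d hd => ?_))
        have ht' : t < i := Finset.mem_range.mp ht
        rw [ih (i - (t + 1)) (by omega) (c - (d : ZMod p)) 0]
      · rw [← sum_sub_range (fun e => S p L i e) c]
        refine Finset.sum_congr rfl (fun d hd => ?_)
        simp
    rw [formula c, formula c']

/-- Prouhet's solution of the Prouhet–Tarry–Escott problem: partitioning
`{0, ..., p^(M+1) - 1}` into classes `S_j = {n : v_p(n) = j}`, all classes have equal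
sums of like powers up to degree `M`. -/
theorem prouhet_tarry_escott (p M : ℕ) (hp : 2 ≤ p) (hM : 1 ≤ M)
    (m : ℕ) (hm : m ≤ M) (j k : ℕ) (hj : j ≤ p - 1) (hk : k ≤ p - 1) :
    ∑ n ∈ (Finset.range (p ^ (M + 1))).filter (fun n => vp p n = j), n ^ m =
    ∑ n ∈ (Finset.range (p ^ (M + 1))).filter (fun n => vp p n = k), n ^ m := by
  have hfilter : ∀ x : ℕ, x ≤ p - 1 →
      (Finset.range (p ^ (M + 1))).filter (fun n => vp p n = x) =
      (Finset.range (p ^ (M + 1))).filter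
        (fun n => (((Nat.digits p n).sum : ℕ) : ZMod p) = (x : ZMod p)) := by
    intro x hx
    refine Finset.filter_congr (fun n _ => ?_)
    rw [vp, ZMod.natCast_eq_natCast_iff]
    unfold Nat.ModEq
    rw [Nat.mod_eq_of_lt (by omega : x < p)]
  rw [hfilter j hj, hfilter k hk]
  exact S_indep hp (M + 1) m (by omega) (j : ZMod p) (k : ZMod p)
end

section
/- Let p ≥ 2 be an integer and let a_0, ..., a_{p−1} be complex numbers with a_0 + a_1 + ... + a_{p−1} = 0. For N ≥ 1 define the polynomial F_N(x; A) = ∑_{n=0}^{p^N − 1} a_{v_p(n)} x^n. Then for every positive integer N there exists a polynomial P_N(x) with complex coefficients such that F_N(x; A) = P_N(x) · ∏_{m=0}^{N−1} (1 − x^{p^m}). -/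
open Polynomial

/-- `F_N(x; A) = ∑_{n=0}^{p^N - 1} a_{v_p(n)} x^n`. -/
noncomputable def FN (p : ℕ) (a : ℕ → ℂ) (N : ℕ) : Polynomial ℂ :=
  ∑ n ∈ Finset.range (p ^ N), C (a (vp p n)) * X ^ n

theorem sum_range_mul' {M : Type*} [AddCommMonoid M] (f : ℕ → M) (a b : ℕ) :
    ∑ n ∈ Finset.range (a * b), f n
      = ∑ i ∈ Finset.range a, ∑ j ∈ Finset.range b, f (i * b + j) := by
  induction a with
  | zero => simp
  | succ a ih =>
      rw [Nat.succ_mul, Finset.sum_range_add, ih, Finset.sum_range_succ]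

theorem digit_sum_decomp (p : ℕ) (hp : 2 ≤ p) :
    ∀ N i m, i < p → m < p ^ N →
      (Nat.digits p (i * p ^ N + m)).sum = (Nat.digits p m).sum + i := by
  intro N
  induction N with
  | zero =>
      intro i m hi hm
      have hm0 : m = 0 := by simpa using hm
      subst hm0
      rcases Nat.eq_zero_or_pos i with rfl | hi0
      · simp
      · rw [Nat.digits_def' hp (by simpa using hi0)]
        simp [Nat.mod_eq_of_lt hi, Nat.div_eq_of_lt hi]
  | succ N ih =>
      intro i m hi hm
      rcases Nat.eq_zero_or_pos (i * p ^ (N + 1) + m) with h0 | hpos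
      · have hpp : 0 < p ^ (N + 1) := pow_pos (by omega) _
        have h1 : i * p ^ (N + 1) = 0 ∧ m = 0 := by omega
        have : i = 0 := by
          rcases Nat.mul_eq_zero.mp h1.1 with h | h
          · exact h
          · omega
        simp [this, h1.2]
      rw [Nat.digits_def' hp hpos]
      have hpe : p ^ (N + 1) = p * p ^ N := by rw [pow_succ]; ring
      have hmod : (i * p ^ (N + 1) + m) % p = m % p := by
        rw [hpe, show i * (p * p ^ N) = p * (i * p ^ N) by ring, Nat.mul_add_mod]
      have hdiv : (i * p ^ (N + 1) + m) / p = i * p ^ N + m / p := by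
        rw [hpe, show i * (p * p ^ N) + m = m + i * p ^ N * p by ring,
          Nat.add_mul_div_right _ _ (by omega)]
        ring
      have hmlt : m / p < p ^ N := Nat.div_lt_of_lt_mul (by rw [← hpe]; exact hm)
      rw [List.sum_cons, hmod, hdiv, ih i (m / p) hi hmlt]
      rcases Nat.eq_zero_or_pos m with rfl | hm0
      · simp
      · rw [Nat.digits_def' hp hm0, List.sum_cons]; ring

theorem vp_decomp (p : ℕ) (hp : 2 ≤ p) {N i m : ℕ} (hi : i < p) (hm : m < p ^ N) :
    vp p (i * p ^ N + m) = (vp p m + i) % p := by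
  unfold vp
  rw [digit_sum_decomp p hp N i m hi hm, Nat.mod_add_mod]

theorem sum_shift (p : ℕ) (hp : 0 < p) (f : ℕ → ℂ) (i : ℕ) :
    ∑ j ∈ Finset.range p, f ((j + i) % p) = ∑ j ∈ Finset.range p, f j := by
  haveI : NeZero p := ⟨by omega⟩
  rw [Finset.sum_range fun j => f ((j + i) % p), Finset.sum_range fun j => f j]
  exact Fintype.sum_equiv (Equiv.addRight (⟨i % p, Nat.mod_lt _ hp⟩ : Fin p))
    (fun x => f ((x.val + i) % p)) (fun x => f x.val) (fun x => by
      show f ((x.val + i) % p) = f ((x + (⟨i % p, Nat.mod_lt _ hp⟩ : Fin p)).val)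
      congr 1
      rw [Fin.val_add]
      exact (Nat.add_mod_mod _ _ _).symm)

theorem DN_ne_zero (p : ℕ) (hp : 2 ≤ p) (N : ℕ) :
    (∏ m ∈ Finset.range N, (1 - X ^ (p ^ m)) : Polynomial ℂ) ≠ 0 := by
  apply Finset.prod_ne_zero_iff.mpr
  intro m _
  intro h
  have h0 := congrArg (eval 0) h
  have hpm : p ^ m ≠ 0 := pow_ne_zero _ (by omega)
  simp [zero_pow hpm] at h0

theorem key (p : ℕ) (hp : 2 ≤ p) :
    ∀ N, ∀ a : ℕ → ℂ, (∑ i ∈ Finset.range p, a i = 0) →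
      (∏ m ∈ Finset.range N, (1 - X ^ (p ^ m))) ∣ FN p a N := by
  intro N
  induction N with
  | zero => intro a _; simp
  | succ N ih =>
      intro a ha
      set D : Polynomial ℂ := ∏ m ∈ Finset.range N, (1 - X ^ (p ^ m)) with hD
      -- decomposition
      have h1 : FN p a (N + 1)
          = ∑ i ∈ Finset.range p, X ^ (i * p ^ N) * FN p (fun j => a ((j + i) % p)) N := by
        unfold FN
        rw [show p ^ (N + 1) = p * p ^ N from by rw [pow_succ]; ring, sum_range_mul']
        refine Finset.sum_congr rfl fun i hi => ?_
        rw [Finset.mul_sum]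
        refine Finset.sum_congr rfl fun j hj => ?_
        rw [vp_decomp p hp (Finset.mem_range.mp hi) (Finset.mem_range.mp hj),
          pow_add]
        ring
      -- choose P_i
      have hIH : ∀ i, ∃ Q : Polynomial ℂ, FN p (fun j => a ((j + i) % p)) N = D * Q := by
        intro i
        exact ih (fun j => a ((j + i) % p))
          (by rw [sum_shift p (by omega) a i]; exact ha)
      choose P hP using hIH
      -- sum of the shifted polynomials is zero
      have h2 : ∑ i ∈ Finset.range p, FN p (fun j => a ((j + i) % p)) N = 0 := by
        unfold FN
        rw [Finset.sum_comm]
        refine Finset.sum_eq_zero fun n _ => ?_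
        rw [← Finset.sum_mul, ← map_sum C]
        have h4 : ∑ i ∈ Finset.range p, a ((vp p n + i) % p)
            = ∑ i ∈ Finset.range p, a ((i + vp p n) % p) :=
          Finset.sum_congr rfl fun i _ => by rw [add_comm]
        rw [h4, sum_shift p (by omega) a (vp p n), ha]
        simp
      have hPsum : ∑ i ∈ Finset.range p, P i = 0 := by
        have : D * ∑ i ∈ Finset.range p, P i = 0 := by
          rw [Finset.mul_sum]
          rw [← Finset.sum_congr rfl fun i (_ : i ∈ Finset.range p) => (hP i)]
          exact h2
        rcases mul_eq_zero.mp this with h | h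
        · exact absurd h (DN_ne_zero p hp N)
        · exact h
      -- rewrite FN (N+1)
      have h3 : FN p a (N + 1)
          = ∑ i ∈ Finset.range p, (X ^ (i * p ^ N) - 1) * (D * P i) := by
        rw [h1]
        have : ∀ i ∈ Finset.range p,
            X ^ (i * p ^ N) * FN p (fun j => a ((j + i) % p)) N
              = (X ^ (i * p ^ N) - 1) * (D * P i) + D * P i := by
          intro i _
          rw [hP i]; ring
        rw [Finset.sum_congr rfl this, Finset.sum_add_distrib, ← Finset.mul_sum,
          hPsum, mul_zero, add_zero]
      rw [h3, Finset.prod_range_succ]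
      apply Finset.dvd_sum
      intro i _
      have hdvd : (1 - X ^ (p ^ N) : Polynomial ℂ) ∣ (X ^ (i * p ^ N) - 1) := by
        rw [← neg_sub, neg_dvd]
        have := sub_dvd_pow_sub_pow (X ^ (p ^ N) : Polynomial ℂ) 1 i
        rwa [← pow_mul, one_pow, mul_comm] at this
      rcases hdvd with ⟨c, hc⟩
      exact ⟨c * P i, by rw [hc]; ring⟩

/-- If the coefficients `a_0, ..., a_{p-1}` sum to zero, then `F_N(x; A)` factors as
`P_N(x) ∏_{m=0}^{N-1} (1 - x^{p^m})` for some polynomial `P_N`. -/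
theorem FN_factorization (p : ℕ) (hp : 2 ≤ p) (a : ℕ → ℂ)
    (ha : ∑ i ∈ Finset.range p, a i = 0) (N : ℕ) (hN : 1 ≤ N) :
    ∃ P : Polynomial ℂ, FN p a N = P * ∏ m ∈ Finset.range N, (1 - X ^ (p ^ m)) := by
  rcases key p hp N a ha with ⟨c, hc⟩
  exact ⟨c, by rw [hc, mul_comm]⟩
end

section
/- Let p ≥ 2 and N ≥ 0 be integers and let ω be a complex number with ω^p = 1. Then the polynomial identity ∏_{m=0}^{N} (1 + ω x^{p^m} + ω^2 x^{2 p^m} + ... + ω^{p−1} x^{(p−1) p^m}) = ∑_{n=0}^{p^{N+1} − 1} ω^{v_p(n)} x^n holds, i.e. ∏_{m=0}^{N} ( ∑_{j=0}^{p−1} ω^j x^{j p^m} ) = ∑_{n=0}^{p^{N+1} − 1} ω^{v_p(n)} x^n. -/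
open Polynomial

lemma omega_pow_mod {p : ℕ} (hp : 0 < p) {ω : ℂ} (hω : ω ^ p = 1) (a : ℕ) :
    ω ^ (a % p) = ω ^ a := by
  conv_rhs => rw [← Nat.div_add_mod a p]
  rw [pow_add, pow_mul, hω, one_pow, one_mul]

lemma digits_len_le_of_lt_pow {p r k : ℕ} (hp : 1 < p) (hr : r < p ^ k) :
    (Nat.digits p r).length ≤ k := by
  by_contra h
  push_neg at h
  rcases Nat.eq_zero_or_pos r with rfl | hr0
  · simp at h
  have h1 : p ^ (Nat.digits p r).length ≤ p * r :=
    Nat.base_pow_length_digits_le p r hp hr0.ne'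
  have h2 : p ^ (k + 1) ≤ p ^ (Nat.digits p r).length := Nat.pow_le_pow_right hp.le h
  have : p * p ^ k ≤ p * r := by
    calc p * p ^ k = p ^ (k + 1) := by ring
    _ ≤ p ^ (Nat.digits p r).length := h2
    _ ≤ p * r := h1
  exact absurd (Nat.le_of_mul_le_mul_left this (by omega)) (not_le.mpr hr)

lemma digits_sum_add {p r k j : ℕ} (hp : 1 < p) (hr : r < p ^ k) :
    (Nat.digits p (r + p ^ k * j)).sum = (Nat.digits p r).sum + (Nat.digits p j).sum := by
  rcases Nat.eq_zero_or_pos j with rfl | hj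
  · simp
  have hlen : (Nat.digits p r).length ≤ k := digits_len_le_of_lt_pow hp hr
  have := Nat.digits_append_zeroes_append_digits (k := k - (Nat.digits p r).length)
    (m := j) (n := r) hp hj
  rw [Nat.add_sub_cancel' hlen] at this
  rw [← this]
  simp [List.sum_append]

lemma digits_sum_lt {p n : ℕ} (hp : 1 < p) (hn : n < p) : (Nat.digits p n).sum = n := by
  rcases Nat.eq_zero_or_pos n with rfl | hn0
  · simp
  rw [Nat.digits_def' hp hn0, Nat.mod_eq_of_lt hn, Nat.div_eq_of_lt hn]
  simp

lemma sum_range_mul_eq {M : Type*} [AddCommMonoid M] (f : ℕ → M) (a b : ℕ) :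
    ∑ n ∈ Finset.range (a * b), f n
      = ∑ j ∈ Finset.range b, ∑ r ∈ Finset.range a, f (r + a * j) := by
  induction b with
  | zero => simp
  | succ b ih =>
    rw [Nat.mul_succ, Finset.sum_range_add, ih, Finset.sum_range_succ]
    exact congrArg _ (Finset.sum_congr rfl fun x _ => by rw [Nat.add_comm])

/-- Product generating function for the generalized Prouhet–Thue–Morse sequence:
`∏_{m=0}^{N} (∑_{j=0}^{p-1} ω^j x^{j p^m}) = ∑_{n=0}^{p^{N+1} - 1} ω^{v_p(n)} x^n`
for any `p`-th root of unity `ω`. -/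
theorem pgf_root_of_unity (p : ℕ) (hp : 2 ≤ p) (N : ℕ) (ω : ℂ) (hω : ω ^ p = 1) :
    ∏ m ∈ Finset.range (N + 1),
        (∑ j ∈ Finset.range p, C (ω ^ j) * X ^ (j * p ^ m)) =
      ∑ n ∈ Finset.range (p ^ (N + 1)), C (ω ^ vp p n) * X ^ n := by
  have hp1 : 1 < p := hp
  have hp0 : 0 < p := by omega
  have hvp : ∀ n : ℕ, ω ^ vp p n = ω ^ (Nat.digits p n).sum := fun n =>
    omega_pow_mod hp0 hω _
  induction N with
  | zero =>
    rw [Finset.prod_range_one, pow_one]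
    refine Finset.sum_congr rfl fun n hn => ?_
    rw [Finset.mem_range] at hn
    rw [hvp, digits_sum_lt hp1 hn, pow_zero, mul_one]
  | succ N ih =>
    have hsplit : p ^ (N + 1 + 1) = p ^ (N + 1) * p := by ring
    rw [Finset.prod_range_succ, ih, hsplit,
      sum_range_mul_eq (fun n => C (ω ^ vp p n) * X ^ n) (p ^ (N + 1)) p,
      Finset.sum_mul_sum, Finset.sum_comm]
    refine Finset.sum_congr rfl fun j hj => Finset.sum_congr rfl fun r hr => ?_
    rw [Finset.mem_range] at hj hr

    rw [hvp, hvp, digits_sum_add hp1 hr, digits_sum_lt hp1 hj]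
    rw [pow_add ω, pow_add X, map_mul]
    ring
end

section
/- Let p ≥ 2 and M ≥ 1 be integers, let a_0, ..., a_{p−1} be complex numbers with a_0 + a_1 + ... + a_{p−1} = 0, and for 0 ≤ j ≤ p − 1 let s_j(m) = ∑_{0 ≤ n < p^{M+1}, v_p(n) = j} n^m (with 0^0 = 1). Then for every m with 0 ≤ m ≤ M, a_0 s_0(m) + a_1 s_1(m) + ... + a_{p−1} s_{p−1}(m) = 0. -/
open Fin.NatCast in
/-- Shift invariance of a sum over residues mod `p`. -/
lemma shift_sum (p : ℕ) (hp : 2 ≤ p) (a : ℕ → ℂ) (c : ℕ) :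
    ∑ r ∈ Finset.range p, a ((r + c) % p) = ∑ i ∈ Finset.range p, a i := by
  haveI : NeZero p := ⟨by omega⟩
  rw [← Fin.sum_univ_eq_sum_range (fun r => a ((r + c) % p)),
    ← Fin.sum_univ_eq_sum_range a]
  have hval : ∀ i : Fin p, ((i + (c : Fin p)) : Fin p).val = (i.val + c) % p := by
    intro i
    rw [Fin.add_def, Fin.val_natCast]
    exact Nat.add_mod_mod _ _ _
  calc ∑ i : Fin p, a ((i.val + c) % p)
      = ∑ i : Fin p, a ((i + (c : Fin p)).val) := by
        exact Finset.sum_congr rfl fun i _ => by rw [hval]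
    _ = ∑ i : Fin p, a i.val :=
        Fintype.sum_equiv (Equiv.addRight (c : Fin p))
          (fun i => a ((i + (c : Fin p)).val)) (fun i => a i.val) (fun i => rfl)

lemma digitsum_mul_add (p q r : ℕ) (hp : 2 ≤ p) (hr : r < p) :
    (Nat.digits p (p * q + r)).sum = r + (Nat.digits p q).sum := by
  rcases Nat.eq_zero_or_pos (p * q + r) with h | h
  · have hq : q = 0 := by
      rcases Nat.eq_zero_or_pos q with h' | h'
      · exact h'
      · exfalso; nlinarith
    have hr0 : r = 0 := by omega
    simp [hq, hr0]
  · rw [Nat.digits_def' (by omega : 1 < p) h]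
    have h1 : (p * q + r) % p = r := by
      rw [Nat.mul_add_mod, Nat.mod_eq_of_lt hr]
    have h2 : (p * q + r) / p = q := by
      rw [Nat.mul_add_div (by omega), Nat.div_eq_of_lt hr]
      omega
    rw [h1, h2, List.sum_cons]

/-- Sum over `range (N * p)` splits as a double sum via `n = p*q + r`. -/
lemma sum_range_mul {N p : ℕ} (hp : 0 < p) (f : ℕ → ℂ) :
    ∑ n ∈ Finset.range (N * p), f n
      = ∑ q ∈ Finset.range N, ∑ r ∈ Finset.range p, f (p * q + r) := by
  rw [← Finset.sum_product']
  apply Finset.sum_nbij' (fun n => (n / p, n % p)) (fun qr => p * qr.1 + qr.2)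
  · intro n hn
    simp only [Finset.mem_range] at hn
    simp only [Finset.mem_product, Finset.mem_range]
    exact ⟨Nat.div_lt_of_lt_mul (by rwa [Nat.mul_comm] at hn), Nat.mod_lt _ hp⟩
  · intro qr hqr
    simp only [Finset.mem_product, Finset.mem_range] at hqr
    simp only [Finset.mem_range]
    calc p * qr.1 + qr.2 < p * qr.1 + p := by omega
      _ = p * (qr.1 + 1) := by ring
      _ ≤ p * N := Nat.mul_le_mul_left p (by omega)
      _ = N * p := by ring
  · intro n _
    exact Nat.div_add_mod n p
  · intro qr hqr
    simp only [Finset.mem_product, Finset.mem_range] at hqr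
    have h1 : (p * qr.1 + qr.2) / p = qr.1 := by
      rw [Nat.mul_add_div hp, Nat.div_eq_of_lt hqr.2]; omega
    have h2 : (p * qr.1 + qr.2) % p = qr.2 := by
      rw [Nat.mul_add_mod, Nat.mod_eq_of_lt hqr.2]
    simp [h1, h2]
  · intro n _
    rw [Nat.div_add_mod]

lemma key_s8 (p : ℕ) (hp : 2 ≤ p) :
    ∀ (K : ℕ) (a : ℕ → ℂ), (∑ i ∈ Finset.range p, a i = 0) → ∀ m, m < K →
      ∑ n ∈ Finset.range (p ^ K), a ((Nat.digits p n).sum % p) * (n : ℂ) ^ m = 0 := by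
  intro K
  induction K with
  | zero => intro a ha m hm; omega
  | succ K ih =>
      intro a ha m hm
      have hpow : p ^ (K + 1) = p ^ K * p := by ring
      rw [hpow, sum_range_mul (by omega)]
      have expand : ∀ q ∈ Finset.range (p ^ K), ∀ r ∈ Finset.range p,
          a ((Nat.digits p (p * q + r)).sum % p) * ((p * q + r : ℕ) : ℂ) ^ m
            = ∑ k ∈ Finset.range (m + 1),
                a ((r + (Nat.digits p q).sum) % p) *
                  ((r : ℂ) ^ k * ((p : ℂ) * q) ^ (m - k) * (m.choose k : ℂ)) := by
        intro q _ r hr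
        rw [digitsum_mul_add p q r hp (Finset.mem_range.mp hr)]
        have hbin : ((p * q + r : ℕ) : ℂ) ^ m
            = ∑ k ∈ Finset.range (m + 1),
                (r : ℂ) ^ k * ((p : ℂ) * q) ^ (m - k) * (m.choose k : ℂ) := by
          push_cast
          rw [show ((p : ℂ) * q + r) = (r : ℂ) + (p : ℂ) * q by ring, add_pow]
        rw [hbin, Finset.mul_sum]
      rw [Finset.sum_congr rfl (fun q hq => Finset.sum_congr rfl (expand q hq))]
      -- reorder sums: q r k → k r q
      have hre : (∑ q ∈ Finset.range (p ^ K), ∑ r ∈ Finset.range p,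
            ∑ k ∈ Finset.range (m + 1),
              a ((r + (Nat.digits p q).sum) % p) *
                ((r : ℂ) ^ k * ((p : ℂ) * q) ^ (m - k) * (m.choose k : ℂ)))
          = ∑ k ∈ Finset.range (m + 1), ∑ r ∈ Finset.range p,
              ∑ q ∈ Finset.range (p ^ K),
                a ((r + (Nat.digits p q).sum) % p) *
                  ((r : ℂ) ^ k * ((p : ℂ) * q) ^ (m - k) * (m.choose k : ℂ)) :=
        (Finset.sum_comm).trans
          ((Finset.sum_congr rfl fun _ _ => Finset.sum_comm).trans Finset.sum_comm)
      rw [hre]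
      apply Finset.sum_eq_zero
      intro k hk
      have hkm := Finset.mem_range.mp hk
      rcases Nat.eq_zero_or_pos k with hk0 | hk1
      · subst hk0
        rw [Finset.sum_comm]
        apply Finset.sum_eq_zero
        intro q _
        have h0 : ∀ r ∈ Finset.range p,
            a ((r + (Nat.digits p q).sum) % p) *
              ((r : ℂ) ^ 0 * ((p : ℂ) * q) ^ (m - 0) * (m.choose 0 : ℂ))
            = a ((r + (Nat.digits p q).sum) % p) * ((p : ℂ) * q) ^ m := by
          intro r _
          simp
        rw [Finset.sum_congr rfl h0, ← Finset.sum_mul,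
          shift_sum p hp a (Nat.digits p q).sum, ha, zero_mul]
      · apply Finset.sum_eq_zero
        intro r hr
        have hreorder : ∀ q ∈ Finset.range (p ^ K),
            a ((r + (Nat.digits p q).sum) % p) *
              ((r : ℂ) ^ k * ((p : ℂ) * q) ^ (m - k) * (m.choose k : ℂ))
            = ((r : ℂ) ^ k * (p : ℂ) ^ (m - k) * (m.choose k : ℂ)) *
                ((fun j => a ((r + j) % p)) ((Nat.digits p q).sum % p) * (q : ℂ) ^ (m - k)) := by
          intro q _
          simp only [Nat.add_mod_mod]
          rw [mul_pow]
          ring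
        rw [Finset.sum_congr rfl hreorder, ← Finset.mul_sum]
        have hsum0 : ∑ i ∈ Finset.range p, (fun j => a ((r + j) % p)) i = 0 := by
          have hc : ∀ i ∈ Finset.range p, a ((r + i) % p) = a ((i + r) % p) := by
            intro i _; rw [Nat.add_comm]
          simp only
          rw [Finset.sum_congr rfl hc, shift_sum p hp a r, ha]
        rw [ih (fun j => a ((r + j) % p)) hsum0 (m - k) (by omega), mul_zero]

/-- If `a_0 + ... + a_{p-1} = 0`, then the weighted combination of the power sums
`s_j(m) = ∑_{0 ≤ n < p^{M+1}, v_p(n) = j} n^m` vanishes: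
`∑_{j=0}^{p-1} a_j s_j(m) = 0` for all `0 ≤ m ≤ M`. -/
theorem weighted_power_sums_eq_zero (p M : ℕ) (hp : 2 ≤ p) (hM : 1 ≤ M)
    (a : ℕ → ℂ) (ha : ∑ i ∈ Finset.range p, a i = 0) (m : ℕ) (hm : m ≤ M) :
    ∑ j ∈ Finset.range p,
        a j * ∑ n ∈ (Finset.range (p ^ (M + 1))).filter (fun n => vp p n = j),
          (n : ℂ) ^ m = 0 := by
  have hswap : ∑ j ∈ Finset.range p,
      a j * ∑ n ∈ (Finset.range (p ^ (M + 1))).filter (fun n => vp p n = j), (n : ℂ) ^ m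
      = ∑ n ∈ Finset.range (p ^ (M + 1)), a (vp p n) * (n : ℂ) ^ m := by
    have h1 : ∀ j ∈ Finset.range p,
        a j * ∑ n ∈ (Finset.range (p ^ (M + 1))).filter (fun n => vp p n = j), (n : ℂ) ^ m
        = ∑ n ∈ Finset.range (p ^ (M + 1)),
            if vp p n = j then a j * (n : ℂ) ^ m else 0 := by
      intro j _
      rw [Finset.mul_sum, Finset.sum_filter]
    rw [Finset.sum_congr rfl h1, Finset.sum_comm]
    refine Finset.sum_congr rfl fun n _ => ?_
    have hmem : vp p n ∈ Finset.range p := by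
      simp only [Finset.mem_range, vp]
      exact Nat.mod_lt _ (by omega)
    rw [Finset.sum_ite_eq (Finset.range p) (vp p n) (fun j => a j * (n : ℂ) ^ m),
      if_pos hmem]
  rw [hswap]
  exact key_s8 p hp (M + 1) a ha m (by omega)
end

section
/- Let p ≥ 2 and M ≥ 0 be integers, let ω be a complex primitive p-th root of unity, and let μ_0, μ_1, ..., μ_M be arbitrary positive integers. Then for every integer m with 0 ≤ m ≤ M, ∑ ω^{a_0 + a_1 + ... + a_M} (a_0 μ_0 + a_1 μ_1 + ... + a_M μ_M)^m = 0, where the sum runs over all tuples (a_0, ..., a_M) with each a_i an integer satisfying 0 ≤ a_i ≤ p − 1 (with 0^0 = 1). -/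
/-- Lehmer's identity: if `ω` is a primitive `p`-th root of unity and
`μ_0, ..., μ_M` are positive integers, then for every `0 ≤ m ≤ M`,
`∑_{a : {0,...,M} → {0,...,p-1}} ω^{∑ a_i} (∑ a_i μ_i)^m = 0`. -/
theorem lehmer_identity (p : ℕ) (hp : 2 ≤ p) (M : ℕ) (ω : ℂ)
    (hω : IsPrimitiveRoot ω p) (μ : Fin (M + 1) → ℕ) (hμ : ∀ i, 0 < μ i)
    (m : ℕ) (hm : m ≤ M) :
    ∑ a : Fin (M + 1) → Fin p,
        ω ^ (∑ i, (a i : ℕ)) * ((∑ i, (a i : ℕ) * μ i : ℕ) : ℂ) ^ m = 0 := by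
  classical
  have hzero : ∑ x : Fin p, ω ^ (x : ℕ) = 0 := by
    rw [Fin.sum_univ_eq_sum_range (fun i => ω ^ i) p]
    exact hω.geom_sum_eq_zero hp
  have key : ∀ a : Fin (M + 1) → Fin p,
      ω ^ (∑ i, (a i : ℕ)) * ((∑ i, (a i : ℕ) * μ i : ℕ) : ℂ) ^ m
      = ∑ f : Fin m → Fin (M + 1), ∏ i,
          (ω ^ (a i : ℕ) * (((a i : ℕ) : ℂ) * (μ i : ℂ)) ^ Fintype.card {j // f j = i}) := by
    intro a
    have h1 : ((∑ i, (a i : ℕ) * μ i : ℕ) : ℂ) = ∑ i, ((a i : ℕ) : ℂ) * (μ i : ℂ) := by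
      push_cast; rfl
    rw [h1, Fintype.sum_pow, Finset.mul_sum]
    refine Finset.sum_congr rfl fun f _ => ?_
    have h2 : ω ^ (∑ i, (a i : ℕ)) = ∏ i, ω ^ (a i : ℕ) := by
      rw [Finset.prod_pow_eq_pow_sum]
    have h3 : (∏ j, ((a (f j) : ℕ) : ℂ) * (μ (f j) : ℂ))
        = ∏ i, (((a i : ℕ) : ℂ) * (μ i : ℂ)) ^ Fintype.card {j // f j = i} := by
      rw [← Fintype.prod_fiberwise' f (fun i => ((a i : ℕ) : ℂ) * (μ i : ℂ))]
      simp [Finset.prod_const]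
    rw [h2, h3, ← Finset.prod_mul_distrib]
  rw [Finset.sum_congr rfl fun a _ => key a, Finset.sum_comm]
  refine Finset.sum_eq_zero fun f _ => ?_
  have hns : ¬Function.Surjective f := by
    intro h
    have := Fintype.card_le_of_surjective f h
    simp only [Fintype.card_fin] at this
    omega
  obtain ⟨i₀, hi₀⟩ := not_forall.mp hns
  push_neg at hi₀
  have hswap : ∑ a : Fin (M + 1) → Fin p, ∏ i,
      (ω ^ (a i : ℕ) * (((a i : ℕ) : ℂ) * (μ i : ℂ)) ^ Fintype.card {j // f j = i})
      = ∏ i, ∑ x : Fin p,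
      (ω ^ (x : ℕ) * (((x : ℕ) : ℂ) * (μ i : ℂ)) ^ Fintype.card {j // f j = i}) := by
    rw [← Finset.sum_prod_piFinset (Finset.univ : Finset (Fin p))
      (fun (i : Fin (M + 1)) (x : Fin p) => ω ^ (x : ℕ) * (((x : ℕ) : ℂ) * (μ i : ℂ)) ^ Fintype.card {j // f j = i})]
    rw [Fintype.piFinset_univ]
  rw [hswap]
  refine Finset.prod_eq_zero (Finset.mem_univ i₀) ?_
  have hc : Fintype.card {j // f j = i₀} = 0 := by
    simp [Fintype.card_eq_zero_iff]
    exact ⟨fun x => hi₀ x.1 x.2⟩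
  rw [hc]
  simpa using hzero
end
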